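/- arXiv:2510.18712 — 6 statements merged into one kernel-verified Lean document; each statement's English description precedes it below -/
import Mathlib

section
/- Let N, n be positive natural numbers, A, P : Matrix (Fin n) (Fin n) ℝ, G_i : Fin N → Matrix (Fin n) (Fin n) ℝ, G = ∑ i, G_i i, κ : ℝ, and Q : Matrix (Fin N) (Fin N) ℝ with zero column sums, i.e. ∀ j, ∑ i, Q i j = 0. Define A* : Matrix (Fin N × Fin n) (Fin N × Fin n) ℝ by A* = blockDiag (fun i => A - (N : ℝ) • (P * G_i i)) - κ • (Q ⊗ₖ P). Then for every ε : Fin n → ℝ, letting e : Fin N × Fin n → ℝ be the consensus vector e (i,k) = ε k, one has (1/(N:ℝ)) • (fun k => ∑ i, (A* *ᵥ e) (i,k)) = (A - P * G) *ᵥ ε. -/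
open Matrix Kronecker BigOperators

def blockDiag {N n : ℕ} (G : Fin N → Matrix (Fin n) (Fin n) ℝ) :
    Matrix (Fin N × Fin n) (Fin N × Fin n) ℝ :=
  Matrix.of fun p q => if p.1 = q.1 then G p.1 p.2 q.2 else 0

theorem stmt1 {N n : ℕ} (hN : 0 < N) (hn : 0 < n)
    (A P : Matrix (Fin n) (Fin n) ℝ) (G_i : Fin N → Matrix (Fin n) (Fin n) ℝ)
    (G : Matrix (Fin n) (Fin n) ℝ) (hG : G = ∑ i, G_i i)
    (κ : ℝ) (Q : Matrix (Fin N) (Fin N) ℝ) (hQ : ∀ j, ∑ i, Q i j = 0)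
    (Astar : Matrix (Fin N × Fin n) (Fin N × Fin n) ℝ)
    (hAstar : Astar = blockDiag (fun i => A - (N : ℝ) • (P * G_i i)) - κ • (Q ⊗ₖ P))
    (ε : Fin n → ℝ) (e : Fin N × Fin n → ℝ) (he : ∀ i k, e (i, k) = ε k) :
    (1 / (N : ℝ)) • (fun k => ∑ i, (Astar *ᵥ e) (i, k)) = (A - P * G) *ᵥ ε := by
  have hN' : (N:ℝ) ≠ 0 := Nat.cast_ne_zero.mpr hN.ne'
  subst hAstar hG
  funext k
  have he' : ∀ p : Fin N × Fin n, e p = ε p.2 := fun p => he p.1 p.2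
  simp only [Pi.smul_apply, smul_eq_mul, mulVec, dotProduct, _root_.blockDiag,
    kroneckerMap_apply, Matrix.sub_apply, Matrix.of_apply, Fintype.sum_prod_type,
    Matrix.smul_apply, smul_eq_mul, he', sub_mul, mul_sub, Finset.sum_sub_distrib,
    ite_mul, zero_mul, Finset.sum_ite_eq, Finset.mem_univ, if_true,
    Matrix.sum_apply]
  have hz : ∑ x : Fin N, ∑ x1 : Fin N, ∑ x2 : Fin n,
      κ * (Q x x1 * P k x2) * ε x2 = 0 := by
    rw [Finset.sum_comm]
    refine Finset.sum_eq_zero fun x1 _ => ?_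
    rw [Finset.sum_comm]
    refine Finset.sum_eq_zero fun x2 _ => ?_
    simp_rw [show ∀ x, κ * (Q x x1 * P k x2) * ε x2
        = Q x x1 * (κ * P k x2 * ε x2) from fun x => by ring,
      ← Finset.sum_mul, hQ x1, zero_mul]
  rw [hz, mul_zero, sub_zero]
  have hA : (1/(N:ℝ)) * ∑ _x : Fin N, ∑ x2, A k x2 * ε x2
      = ∑ x2, A k x2 * ε x2 := by
    rw [Finset.sum_const, Finset.card_univ, Fintype.card_fin, nsmul_eq_mul]
    field_simp
  have hB : (1/(N:ℝ)) * ∑ x : Fin N, ∑ x2, (N:ℝ) * (P * G_i x) k x2 * ε x2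
      = ∑ x2, (P * ∑ i, G_i i) k x2 * ε x2 := by
    simp_rw [Matrix.mul_sum, Matrix.sum_apply, Finset.sum_mul, Finset.mul_sum]
    rw [Finset.sum_comm]
    refine Finset.sum_congr rfl fun x2 _ => Finset.sum_congr rfl fun x _ => ?_
    field_simp
  have hswap : ∀ x : Fin N, (∑ x1 : Fin N, ∑ x2 : Fin n,
      if x = x1 then A k x2 * ε x2 - (N:ℝ) * (P * G_i x) k x2 * ε x2 else 0)
      = ∑ x2 : Fin n, (A k x2 * ε x2 - (N:ℝ) * (P * G_i x) k x2 * ε x2) := by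
    intro x
    rw [Finset.sum_comm]
    simp
  simp_rw [hswap, Finset.sum_sub_distrib, mul_sub, hA, hB]
end

section
/- Let n, N be positive natural numbers and A, W, P, G, G_i : Matrix (Fin n) (Fin n) ℝ with P invertible and symmetric (Pᵀ = P) and G_i symmetric. Define D = -P⁻¹ * A - Aᵀ * P⁻¹ - P⁻¹ * W * P⁻¹ + G and A_i = A - (N : ℝ) • (P * G_i). Then P⁻¹ * A_i + A_iᵀ * P⁻¹ + D = G - P⁻¹ * W * P⁻¹ - (2 * N : ℝ) • G_i; moreover, if W is positive semidefinite and G_i is positive semidefinite, then the matrix G - (P⁻¹ * A_i + A_iᵀ * P⁻¹ + D) is positive semidefinite. -/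
open Matrix

/- Since `P` and `G_i` are symmetric, the gain term `N • P G_i` of `A_i` contributes `-N G_i` to each
of `P⁻¹ A_i` and `A_iᵀ P⁻¹`, while the `A`-terms cancel against those of `D`. Hence
`G - (P⁻¹ A_i + A_iᵀ P⁻¹ + D) = P⁻¹ W P⁻¹ + 2N G_i`: a congruence of `W` by the symmetric `P⁻¹`
plus a nonnegative multiple of `G_i`, both positive semidefinite. -/

namespace Matrix

theorem inv_mul_add_transpose_mul_inv_of_sub_smul_mul {n α : Type*} [Fintype n] [DecidableEq n]
    [CommRing α] {P G : Matrix n n α} (hP : IsUnit P)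
    (hPsym : Pᵀ = P) (hG : Gᵀ = G) (A : Matrix n n α) (c : α) :
    P⁻¹ * (A - c • (P * G)) + (A - c • (P * G))ᵀ * P⁻¹ = P⁻¹ * A + Aᵀ * P⁻¹ - (2 * c) • G := by
  have hdet := (isUnit_iff_isUnit_det P).mp hP
  rw [transpose_sub, transpose_smul, transpose_mul, hPsym, hG, Matrix.mul_sub, Matrix.sub_mul,
    Matrix.mul_smul, Matrix.smul_mul, nonsing_inv_mul_cancel_left P G hdet,
    mul_nonsing_inv_cancel_right P G hdet, two_mul, add_smul]
  abel

theorem PosSemidef.mul_mul_of_transpose_eq {n : Type*} [Fintype n] {W B : Matrix n n ℝ}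
    (hW : W.PosSemidef) (hB : Bᵀ = B) : (B * W * B).PosSemidef := by
  simpa [conjTranspose_eq_transpose_of_trivial, hB] using hW.mul_mul_conjTranspose_same B

end Matrix

theorem stmt4_general {n N : ℕ}
    (A W P G G_i : Matrix (Fin n) (Fin n) ℝ)
    (hP : IsUnit P) (hPsym : Pᵀ = P) (hGisym : G_iᵀ = G_i)
    (D A_i : Matrix (Fin n) (Fin n) ℝ)
    (hD : D = -P⁻¹ * A - Aᵀ * P⁻¹ - P⁻¹ * W * P⁻¹ + G)
    (hAi : A_i = A - (N : ℝ) • (P * G_i)) :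
    P⁻¹ * A_i + A_iᵀ * P⁻¹ + D = G - P⁻¹ * W * P⁻¹ - (2 * N : ℝ) • G_i ∧
      (W.PosSemidef → G_i.PosSemidef →
        (G - (P⁻¹ * A_i + A_iᵀ * P⁻¹ + D)).PosSemidef) := by
  have key : P⁻¹ * A_i + A_iᵀ * P⁻¹ + D = G - P⁻¹ * W * P⁻¹ - (2 * N : ℝ) • G_i := by
    rw [hAi, inv_mul_add_transpose_mul_inv_of_sub_smul_mul hP hPsym hGisym, hD, Matrix.neg_mul]
    abel
  refine ⟨key, fun hW hGi => ?_⟩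
  have hPinv : P⁻¹ᵀ = P⁻¹ := by rw [transpose_nonsing_inv, hPsym]
  rw [key, show ∀ X Y : Matrix (Fin n) (Fin n) ℝ, G - (G - X - Y) = X + Y from fun _ _ => by abel]
  exact (hW.mul_mul_of_transpose_eq hPinv).add (hGi.smul (by positivity))

theorem stmt4 {n N : ℕ} (hn : 0 < n) (hN : 0 < N)
    (A W P G G_i : Matrix (Fin n) (Fin n) ℝ)
    (hP : IsUnit P) (hPsym : Pᵀ = P) (hGisym : G_iᵀ = G_i)
    (D A_i : Matrix (Fin n) (Fin n) ℝ)
    (hD : D = -P⁻¹ * A - Aᵀ * P⁻¹ - P⁻¹ * W * P⁻¹ + G)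
    (hAi : A_i = A - (N : ℝ) • (P * G_i)) :
    P⁻¹ * A_i + A_iᵀ * P⁻¹ + D = G - P⁻¹ * W * P⁻¹ - (2 * N : ℝ) • G_i ∧
      (W.PosSemidef → G_i.PosSemidef →
        (G - (P⁻¹ * A_i + A_iᵀ * P⁻¹ + D)).PosSemidef) :=
  stmt4_general A W P G G_i hP hPsym hGisym D A_i hD hAi
end

section
/- Let N, n be positive natural numbers, κ ≥ 0, λ ≥ 0, g : ℝ, A, W, P : Matrix (Fin n) (Fin n) ℝ with P invertible and symmetric, G_i : Fin N → Matrix (Fin n) (Fin n) ℝ with each G_i i symmetric positive semidefinite, G = ∑ i, G_i i, W positive semidefinite, and Q : Matrix (Fin N) (Fin N) ℝ such that for every v : Fin N → ℝ with ∑ i, v i = 0 one has λ * (v ⬝ᵥ v) ≤ v ⬝ᵥ (Q *ᵥ v). Assume ∀ v : Fin n → ℝ, v ⬝ᵥ (G *ᵥ v) ≤ g * (v ⬝ᵥ v). Define M : Matrix (Fin N × Fin n) (Fin N × Fin n) ℝ by M = (1 : Matrix (Fin N) (Fin N) ℝ) ⊗ₖ (G - P⁻¹ * W * P⁻¹) -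 (2 * N : ℝ) • blockDiag (fun i => G_i i) - (2 * κ) • (Q ⊗ₖ (1 : Matrix (Fin n) (Fin n) ℝ)). Then for every x : Fin N × Fin n → ℝ with ∀ k, ∑ i, x (i,k) = 0, one has x ⬝ᵥ (M *ᵥ x) ≤ (g - 2 * κ * λ) * (x ⬝ᵥ x). -/
/-!
Split `x` into its blocks `xᵢ = x (i, ·)` and its columns `x (·, k)`. The terms
`1 ⊗ₖ (G - P⁻¹ W P⁻¹)` and `blockDiag Gᵢ` of `M` are block diagonal, so their quadratic forms are
sums over the blocks: the first is at most `g ‖xᵢ‖²` on each block because `P⁻¹ W P⁻¹` is positive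
semidefinite for symmetric `P`, and the second is nonnegative. The consensus term `Q ⊗ₖ 1` acts
column by column, and every column of a disagreement vector has zero sum, so the spectral-gap
bound for `Q` applies to each column.
-/

open Matrix Kronecker BigOperators

open Function

section ProductIndex

variable {R ι κ : Type*} [Fintype ι] [Fintype κ]

lemma dotProduct_eq_sum_dotProduct_curry [NonUnitalNonAssocSemiring R] (x y : ι × κ → R) :
    x ⬝ᵥ y = ∑ i, curry x i ⬝ᵥ curry y i := by
  simp [dotProduct, Fintype.sum_prod_type, curry]

lemma dotProduct_eq_sum_dotProduct_columns [NonUnitalNonAssocSemiring R] (x y : ι × κ → R) :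
    x ⬝ᵥ y = ∑ k, (fun i => x (i, k)) ⬝ᵥ (fun i => y (i, k)) := by
  simp only [dotProduct, Fintype.sum_prod_type]
  exact Finset.sum_comm

lemma kronecker_one_mulVec [NonAssocSemiring R] [DecidableEq κ] (Q : Matrix ι ι R)
    (x : ι × κ → R) :
    (Q ⊗ₖ (1 : Matrix κ κ R)) *ᵥ x = fun p => (Q *ᵥ fun i => x (i, p.2)) p.1 := by
  ext ⟨i, k⟩
  simp [mulVec, dotProduct, Fintype.sum_prod_type, one_apply]

lemma le_dotProduct_kronecker_one_mulVec [DecidableEq κ] {Q : Matrix ι ι ℝ} {lam : ℝ}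
    (hQ : ∀ v : ι → ℝ, ∑ i, v i = 0 → lam * (v ⬝ᵥ v) ≤ v ⬝ᵥ (Q *ᵥ v))
    {x : ι × κ → ℝ} (hx : ∀ k, ∑ i, x (i, k) = 0) :
    lam * (x ⬝ᵥ x) ≤ x ⬝ᵥ ((Q ⊗ₖ (1 : Matrix κ κ ℝ)) *ᵥ x) := by
  rw [kronecker_one_mulVec, dotProduct_eq_sum_dotProduct_columns x x,
    dotProduct_eq_sum_dotProduct_columns, Finset.mul_sum]
  exact Finset.sum_le_sum fun k _ => hQ _ (hx k)

end ProductIndex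

section BlockDiag

variable {N n : ℕ}

lemma one_kronecker_eq_blockDiag (B : Matrix (Fin n) (Fin n) ℝ) :
    (1 : Matrix (Fin N) (Fin N) ℝ) ⊗ₖ B = _root_.blockDiag fun _ => B := by
  ext ⟨i, k⟩ ⟨j, l⟩
  by_cases h : i = j <;> simp [_root_.blockDiag, one_apply, h]

lemma blockDiag_mulVec (G : Fin N → Matrix (Fin n) (Fin n) ℝ) (x : Fin N × Fin n → ℝ) :
    _root_.blockDiag G *ᵥ x = uncurry fun i => G i *ᵥ curry x i := by
  ext ⟨i, k⟩
  simp [_root_.blockDiag, mulVec, dotProduct, Fintype.sum_prod_type, curry]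

lemma dotProduct_blockDiag_mulVec (G : Fin N → Matrix (Fin n) (Fin n) ℝ)
    (x : Fin N × Fin n → ℝ) :
    x ⬝ᵥ (_root_.blockDiag G *ᵥ x) = ∑ i, curry x i ⬝ᵥ (G i *ᵥ curry x i) := by
  rw [blockDiag_mulVec, dotProduct_eq_sum_dotProduct_curry]
  rfl

lemma dotProduct_blockDiag_mulVec_le {G : Fin N → Matrix (Fin n) (Fin n) ℝ} {g : ℝ}
    (hG : ∀ i v, v ⬝ᵥ (G i *ᵥ v) ≤ g * (v ⬝ᵥ v)) (x : Fin N × Fin n → ℝ) :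
    x ⬝ᵥ (_root_.blockDiag G *ᵥ x) ≤ g * (x ⬝ᵥ x) := by
  rw [dotProduct_blockDiag_mulVec, dotProduct_eq_sum_dotProduct_curry x x, Finset.mul_sum]
  exact Finset.sum_le_sum fun i _ => hG i _

lemma dotProduct_blockDiag_mulVec_nonneg {G : Fin N → Matrix (Fin n) (Fin n) ℝ}
    (hG : ∀ i, (G i).PosSemidef) (x : Fin N × Fin n → ℝ) :
    0 ≤ x ⬝ᵥ (_root_.blockDiag G *ᵥ x) := by
  rw [dotProduct_blockDiag_mulVec]
  exact Finset.sum_nonneg fun i _ => by simpa using (hG i).dotProduct_mulVec_nonneg (curry x i)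

end BlockDiag

lemma Matrix.PosSemidef.inv_mul_mul_inv_of_transpose_eq {n : Type*} [Fintype n] [DecidableEq n]
    {W P : Matrix n n ℝ} (hW : W.PosSemidef) (hP : Pᵀ = P) : (P⁻¹ * W * P⁻¹).PosSemidef := by
  simpa [transpose_nonsing_inv, hP] using hW.conjTranspose_mul_mul_same P⁻¹

theorem stmt6_general {N n : ℕ}
    (κ : ℝ) (hκ : 0 ≤ κ) (lam : ℝ) (g : ℝ)
    (W P : Matrix (Fin n) (Fin n) ℝ) (hPsym : Pᵀ = P)
    (G_i : Fin N → Matrix (Fin n) (Fin n) ℝ)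
    (hGipsd : ∀ i, (G_i i).PosSemidef)
    (G : Matrix (Fin n) (Fin n) ℝ)
    (hW : W.PosSemidef)
    (Q : Matrix (Fin N) (Fin N) ℝ)
    (hQ : ∀ v : Fin N → ℝ, (∑ i, v i) = 0 → lam * (v ⬝ᵥ v) ≤ v ⬝ᵥ (Q *ᵥ v))
    (hg : ∀ v : Fin n → ℝ, v ⬝ᵥ (G *ᵥ v) ≤ g * (v ⬝ᵥ v))
    (M : Matrix (Fin N × Fin n) (Fin N × Fin n) ℝ)
    (hM : M = (1 : Matrix (Fin N) (Fin N) ℝ) ⊗ₖ (G - P⁻¹ * W * P⁻¹)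
        - (2 * N : ℝ) • blockDiag (fun i => G_i i)
        - (2 * κ) • (Q ⊗ₖ (1 : Matrix (Fin n) (Fin n) ℝ))) :
    ∀ x : Fin N × Fin n → ℝ, (∀ k, (∑ i, x (i, k)) = 0) →
      x ⬝ᵥ (M *ᵥ x) ≤ (g - 2 * κ * lam) * (x ⬝ᵥ x) := by
  intro x hx
  have hRiccati : ∀ v, v ⬝ᵥ ((G - P⁻¹ * W * P⁻¹) *ᵥ v) ≤ g * (v ⬝ᵥ v) := fun v => by
    have hPWP : 0 ≤ v ⬝ᵥ ((P⁻¹ * W * P⁻¹) *ᵥ v) := by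
      simpa using (hW.inv_mul_mul_inv_of_transpose_eq hPsym).dotProduct_mulVec_nonneg v
    rw [sub_mulVec, dotProduct_sub]
    linarith [hg v]
  have hDrift := dotProduct_blockDiag_mulVec_le (fun _ => hRiccati) x
  have hLocal := dotProduct_blockDiag_mulVec_nonneg hGipsd x
  have hConsensus := le_dotProduct_kronecker_one_mulVec hQ hx
  rw [← one_kronecker_eq_blockDiag] at hDrift
  subst hM
  simp only [sub_mulVec, dotProduct_sub, smul_mulVec, dotProduct_smul, smul_eq_mul]
  linarith [mul_nonneg (by positivity : (0 : ℝ) ≤ 2 * N) hLocal,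
    mul_le_mul_of_nonneg_left hConsensus (by positivity : (0 : ℝ) ≤ 2 * κ)]

theorem stmt6 {N n : ℕ} (hN : 0 < N) (hn : 0 < n)
    (κ : ℝ) (hκ : 0 ≤ κ) (lam : ℝ) (hlam : 0 ≤ lam) (g : ℝ)
    (A W P : Matrix (Fin n) (Fin n) ℝ) (hP : IsUnit P) (hPsym : Pᵀ = P)
    (G_i : Fin N → Matrix (Fin n) (Fin n) ℝ)
    (hGisym : ∀ i, (G_i i)ᵀ = G_i i) (hGipsd : ∀ i, (G_i i).PosSemidef)
    (G : Matrix (Fin n) (Fin n) ℝ) (hG : G = ∑ i, G_i i)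
    (hW : W.PosSemidef)
    (Q : Matrix (Fin N) (Fin N) ℝ)
    (hQ : ∀ v : Fin N → ℝ, (∑ i, v i) = 0 → lam * (v ⬝ᵥ v) ≤ v ⬝ᵥ (Q *ᵥ v))
    (hg : ∀ v : Fin n → ℝ, v ⬝ᵥ (G *ᵥ v) ≤ g * (v ⬝ᵥ v))
    (M : Matrix (Fin N × Fin n) (Fin N × Fin n) ℝ)
    (hM : M = (1 : Matrix (Fin N) (Fin N) ℝ) ⊗ₖ (G - P⁻¹ * W * P⁻¹)
        - (2 * N : ℝ) • blockDiag (fun i => G_i i)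
        - (2 * κ) • (Q ⊗ₖ (1 : Matrix (Fin n) (Fin n) ℝ))) :
    ∀ x : Fin N × Fin n → ℝ, (∀ k, (∑ i, x (i, k)) = 0) →
      x ⬝ᵥ (M *ᵥ x) ≤ (g - 2 * κ * lam) * (x ⬝ᵥ x) :=
  stmt6_general κ hκ lam g W P hPsym G_i hGipsd G hW Q hQ hg M hM
end

section
/- Let N, n be positive natural numbers, κ : ℝ, A, W, P : Matrix (Fin n) (Fin n) ℝ with P invertible and symmetric, G_i : Fin N → Matrix (Fin n) (Fin n) ℝ with each G_i i symmetric, G = ∑ i, G_i i, and Q : Matrix (Fin N) (Fin N) ℝ symmetric. Define D = -P⁻¹ * A - Aᵀ * P⁻¹ - P⁻¹ * W * P⁻¹ + G, A* = blockDiag (fun i => A - (N : ℝ) • (P * G_i i)) - κ • (Q ⊗ₖ P), and 𝒩 = (1 : Matrix (Fin N) (Fin N) ℝ) ⊗ₖ P⁻¹. Then (1 : Matrix (Fin N) (Fin N) ℝ) ⊗ₖ D + 𝒩 * A* + A*ᵀ * 𝒩 = (1 : Matrix (Fin N) (Fin N) ℝ) ⊗ₖ (G - P⁻¹ * W * P⁻¹)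 - (2 * N : ℝ) • blockDiag (fun i => G_i i) - (2 * κ) • (Q ⊗ₖ (1 : Matrix (Fin n) (Fin n) ℝ)). -/
open Matrix Kronecker BigOperators

lemma bd_kron_one_mul {N n : ℕ} (M : Matrix (Fin n) (Fin n) ℝ)
    (F : Fin N → Matrix (Fin n) (Fin n) ℝ) :
    ((1 : Matrix (Fin N) (Fin N) ℝ) ⊗ₖ M) * _root_.blockDiag F
      = _root_.blockDiag (fun i => M * F i) := by
  ext ⟨i,k⟩ ⟨j,l⟩
  simp [Matrix.mul_apply, Fintype.sum_prod_type, _root_.blockDiag, Matrix.one_apply,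
    ite_mul, mul_ite, Finset.sum_ite_eq, Finset.sum_ite_eq']
  by_cases h : i = j <;> simp [h]

lemma bd_mul_kron_one {N n : ℕ} (M : Matrix (Fin n) (Fin n) ℝ)
    (F : Fin N → Matrix (Fin n) (Fin n) ℝ) :
    _root_.blockDiag F * ((1 : Matrix (Fin N) (Fin N) ℝ) ⊗ₖ M)
      = _root_.blockDiag (fun i => F i * M) := by
  ext ⟨i,k⟩ ⟨j,l⟩
  simp [Matrix.mul_apply, Fintype.sum_prod_type, _root_.blockDiag, Matrix.one_apply,
    ite_mul, mul_ite, Finset.sum_ite_eq, Finset.sum_ite_eq']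

lemma bd_transpose {N n : ℕ} (F : Fin N → Matrix (Fin n) (Fin n) ℝ) :
    (_root_.blockDiag F)ᵀ = _root_.blockDiag (fun i => (F i)ᵀ) := by
  ext ⟨i,k⟩ ⟨j,l⟩
  simp only [_root_.blockDiag, transpose_apply, Matrix.of_apply]
  by_cases h : i = j <;> simp [h, eq_comm]

lemma one_kron_eq_blockDiag {N n : ℕ} (M : Matrix (Fin n) (Fin n) ℝ) :
    (1 : Matrix (Fin N) (Fin N) ℝ) ⊗ₖ M = _root_.blockDiag (fun _ => M) := by
  ext ⟨i,k⟩ ⟨j,l⟩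
  by_cases h : i = j <;> simp [_root_.blockDiag, Matrix.one_apply, h]

lemma bd_add {N n : ℕ} (F H : Fin N → Matrix (Fin n) (Fin n) ℝ) :
    _root_.blockDiag F + _root_.blockDiag H = _root_.blockDiag (fun i => F i + H i) := by
  ext ⟨i,k⟩ ⟨j,l⟩
  by_cases h : i = j <;> simp [_root_.blockDiag, h]

lemma bd_sub {N n : ℕ} (F H : Fin N → Matrix (Fin n) (Fin n) ℝ) :
    _root_.blockDiag F - _root_.blockDiag H = _root_.blockDiag (fun i => F i - H i) := by
  ext ⟨i,k⟩ ⟨j,l⟩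
  by_cases h : i = j <;> simp [_root_.blockDiag, h]

lemma bd_smul {N n : ℕ} (c : ℝ) (F : Fin N → Matrix (Fin n) (Fin n) ℝ) :
    c • _root_.blockDiag F = _root_.blockDiag (fun i => c • F i) := by
  ext ⟨i,k⟩ ⟨j,l⟩
  by_cases h : i = j <;> simp [_root_.blockDiag, h]

theorem stmt7 {N n : ℕ} (hN : 0 < N) (hn : 0 < n) (κ : ℝ)
    (A W P : Matrix (Fin n) (Fin n) ℝ) (hP : IsUnit P) (hPsym : Pᵀ = P)
    (G_i : Fin N → Matrix (Fin n) (Fin n) ℝ) (hGisym : ∀ i, (G_i i)ᵀ = G_i i)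
    (G : Matrix (Fin n) (Fin n) ℝ) (hG : G = ∑ i, G_i i)
    (Q : Matrix (Fin N) (Fin N) ℝ) (hQsym : Qᵀ = Q)
    (D : Matrix (Fin n) (Fin n) ℝ)
    (hD : D = -P⁻¹ * A - Aᵀ * P⁻¹ - P⁻¹ * W * P⁻¹ + G)
    (Astar 𝒩 : Matrix (Fin N × Fin n) (Fin N × Fin n) ℝ)
    (hAstar : Astar = blockDiag (fun i => A - (N : ℝ) • (P * G_i i)) - κ • (Q ⊗ₖ P))
    (h𝒩 : 𝒩 = (1 : Matrix (Fin N) (Fin N) ℝ) ⊗ₖ P⁻¹) :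
    (1 : Matrix (Fin N) (Fin N) ℝ) ⊗ₖ D + 𝒩 * Astar + Astarᵀ * 𝒩 =
      (1 : Matrix (Fin N) (Fin N) ℝ) ⊗ₖ (G - P⁻¹ * W * P⁻¹)
        - (2 * N : ℝ) • blockDiag (fun i => G_i i)
        - (2 * κ) • (Q ⊗ₖ (1 : Matrix (Fin n) (Fin n) ℝ)) := by
  have hdet : IsUnit P.det := (Matrix.isUnit_iff_isUnit_det P).mp hP
  have hPinv : P⁻¹ * P = 1 := Matrix.nonsing_inv_mul P hdet
  have hPinv' : P * P⁻¹ = 1 := Matrix.mul_nonsing_inv P hdet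
  set F : Fin N → Matrix (Fin n) (Fin n) ℝ := fun i => A - (N : ℝ) • (P * G_i i) with hF
  have h1 : 𝒩 * Astar = _root_.blockDiag (fun i => P⁻¹ * F i)
      - κ • (Q ⊗ₖ (1 : Matrix (Fin n) (Fin n) ℝ)) := by
    rw [h𝒩, hAstar, Matrix.mul_sub, bd_kron_one_mul, Matrix.mul_smul,
      ← Matrix.mul_kronecker_mul, one_mul, hPinv]
  have h2 : Astarᵀ * 𝒩 = _root_.blockDiag (fun i => (F i)ᵀ * P⁻¹)
      - κ • (Q ⊗ₖ (1 : Matrix (Fin n) (Fin n) ℝ)) := by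
    rw [hAstar, Matrix.transpose_sub, Matrix.transpose_smul,
      ← Matrix.kroneckerMap_transpose, hQsym, hPsym, h𝒩, Matrix.sub_mul,
      bd_transpose, bd_mul_kron_one, Matrix.smul_mul,
      ← Matrix.mul_kronecker_mul, mul_one, hPinv']
  have key : (fun i : Fin N => (fun _ : Fin N => D) i + (P⁻¹ * F i) + ((F i)ᵀ * P⁻¹))
      = fun i : Fin N => (G - P⁻¹ * W * P⁻¹) - (2 * N : ℝ) • G_i i := by
    funext i
    have e1 : P⁻¹ * ((N:ℝ) • (P * G_i i)) = (N:ℝ) • G_i i := by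
      rw [Matrix.mul_smul, ← Matrix.mul_assoc, hPinv, Matrix.one_mul]
    have e2 : ((N:ℝ) • (P * G_i i))ᵀ * P⁻¹ = (N:ℝ) • G_i i := by
      rw [Matrix.transpose_smul, Matrix.transpose_mul, hPsym, hGisym, Matrix.smul_mul,
        Matrix.mul_assoc, hPinv', Matrix.mul_one]
    simp only [hF]
    rw [Matrix.mul_sub, e1, Matrix.transpose_sub, Matrix.sub_mul, e2, hD, Matrix.neg_mul]
    module
  have hsplit : _root_.blockDiag (fun _ : Fin N => D)
      + (_root_.blockDiag (fun i => P⁻¹ * F i) - κ • (Q ⊗ₖ (1 : Matrix (Fin n) (Fin n) ℝ)))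
      + (_root_.blockDiag (fun i => (F i)ᵀ * P⁻¹) - κ • (Q ⊗ₖ (1 : Matrix (Fin n) (Fin n) ℝ)))
      = (_root_.blockDiag (fun _ : Fin N => D) + _root_.blockDiag (fun i => P⁻¹ * F i)
          + _root_.blockDiag (fun i => (F i)ᵀ * P⁻¹))
        - (2 * κ) • (Q ⊗ₖ (1 : Matrix (Fin n) (Fin n) ℝ)) := by
    module
  rw [h1, h2, one_kron_eq_blockDiag, one_kron_eq_blockDiag, hsplit]
  congr 1
  rw [bd_add, bd_add, bd_smul, bd_sub]
  exact congrArg _root_.blockDiag key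
end

section
/- Let N, n be positive natural numbers, P : Matrix (Fin n) (Fin n) ℝ, G_i : Fin N → Matrix (Fin n) (Fin n) ℝ, G = ∑ i, G_i i, G_d = blockDiag (fun i => G_i i), and U : Matrix (Fin N) (Fin N) ℝ the all-ones matrix. Define Σ : Matrix (Fin N × Fin n) (Fin N × Fin n) ℝ by Σ = (N^2 : ℝ) • (((1 : Matrix (Fin N) (Fin N) ℝ) ⊗ₖ P) * G_d * ((1 : Matrix (Fin N) (Fin N) ℝ) ⊗ₖ P)) - (N : ℝ) • ((U ⊗ₖ P) * G_d * ((1 : Matrix (Fin N) (Fin N) ℝ) ⊗ₖ P)) - (N : ℝ) • (((1 : Matrix (Fin N) (Fin N) ℝ) ⊗ₖ P) * G_d * (U ⊗ₖ P)) + U ⊗ₖ (P * G * P). Then for all k, l : Fin n, ∑ i, ∑ j, Σ (i,k) (j,l) = 0. -/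
open Matrix Kronecker BigOperators

section aux
variable {N n : ℕ} (P : Matrix (Fin n) (Fin n) ℝ) (G_i : Fin N → Matrix (Fin n) (Fin n) ℝ)
  (U : Matrix (Fin N) (Fin N) ℝ)

lemma entryA (i j : Fin N) (k l : Fin n) :
    (((1 : Matrix (Fin N) (Fin N) ℝ) ⊗ₖ P) * _root_.blockDiag G_i *
      ((1 : Matrix (Fin N) (Fin N) ℝ) ⊗ₖ P)) (i,k) (j,l)
      = if i = j then (P * G_i i * P) k l else 0 := by
  simp only [Matrix.mul_apply, _root_.blockDiag, Matrix.kroneckerMap_apply, Matrix.one_apply,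
    Fintype.sum_prod_type, Matrix.of_apply]
  by_cases h : i = j <;> simp [h, ite_and, Finset.sum_ite_eq, Finset.sum_ite_eq', mul_ite,
    ite_mul, Finset.mul_sum, Finset.sum_mul]

lemma entryB (hU : U = Matrix.of fun _ _ => (1 : ℝ)) (i j : Fin N) (k l : Fin n) :
    ((U ⊗ₖ P) * _root_.blockDiag G_i * ((1 : Matrix (Fin N) (Fin N) ℝ) ⊗ₖ P)) (i,k) (j,l)
      = (P * G_i j * P) k l := by
  subst hU
  simp [Matrix.mul_apply, _root_.blockDiag, Matrix.kroneckerMap_apply, Matrix.one_apply,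
    Fintype.sum_prod_type, ite_and, mul_ite, ite_mul, Finset.mul_sum, Finset.sum_mul,
    Finset.sum_ite_eq, Finset.sum_ite_eq']

lemma entryC (hU : U = Matrix.of fun _ _ => (1 : ℝ)) (i j : Fin N) (k l : Fin n) :
    (((1 : Matrix (Fin N) (Fin N) ℝ) ⊗ₖ P) * _root_.blockDiag G_i * (U ⊗ₖ P)) (i,k) (j,l)
      = (P * G_i i * P) k l := by
  subst hU
  simp [Matrix.mul_apply, _root_.blockDiag, Matrix.kroneckerMap_apply, Matrix.one_apply,
    Fintype.sum_prod_type, ite_and, mul_ite, ite_mul, Finset.mul_sum, Finset.sum_mul,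
    Finset.sum_ite_eq, Finset.sum_ite_eq']

end aux

theorem stmt9 {N n : ℕ} (hN : 0 < N) (hn : 0 < n)
    (P : Matrix (Fin n) (Fin n) ℝ)
    (G_i : Fin N → Matrix (Fin n) (Fin n) ℝ)
    (G : Matrix (Fin n) (Fin n) ℝ) (hG : G = ∑ i, G_i i)
    (G_d : Matrix (Fin N × Fin n) (Fin N × Fin n) ℝ)
    (hGd : G_d = blockDiag (fun i => G_i i))
    (U : Matrix (Fin N) (Fin N) ℝ) (hU : U = Matrix.of fun _ _ => (1 : ℝ))
    (Sig : Matrix (Fin N × Fin n) (Fin N × Fin n) ℝ)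
    (hSig : Sig = (N ^ 2 : ℝ) • (((1 : Matrix (Fin N) (Fin N) ℝ) ⊗ₖ P) * G_d *
          ((1 : Matrix (Fin N) (Fin N) ℝ) ⊗ₖ P))
        - (N : ℝ) • ((U ⊗ₖ P) * G_d * ((1 : Matrix (Fin N) (Fin N) ℝ) ⊗ₖ P))
        - (N : ℝ) • (((1 : Matrix (Fin N) (Fin N) ℝ) ⊗ₖ P) * G_d * (U ⊗ₖ P))
        + U ⊗ₖ (P * G * P)) :
    ∀ k l : Fin n, (∑ i, ∑ j, Sig (i, k) (j, l)) = 0 := by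
  intro k l
  have hGi : (fun i => G_i i) = G_i := rfl
  have hS : (P * G * P) k l = ∑ a, (P * G_i a * P) k l := by
    simp [hG, Matrix.sum_mul, Matrix.mul_sum, Matrix.sum_apply]
  subst hSig hGd
  simp only [Matrix.sub_apply, Matrix.add_apply, Matrix.smul_apply, smul_eq_mul, hGi,
    entryA, entryB P G_i U hU, entryC P G_i U hU]
  simp only [hU, Matrix.kroneckerMap_apply, Matrix.of_apply, one_mul]
  simp only [Finset.sum_add_distrib, Finset.sum_sub_distrib, ← Finset.mul_sum,
    Finset.sum_ite_eq, Finset.sum_ite_eq', Finset.mem_univ, if_true, Finset.sum_const, Finset.card_univ,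
    Fintype.card_fin, nsmul_eq_mul, hS]
  ring
end

section
/- Let n be a positive natural number, A, W, G : Matrix (Fin n) (Fin n) ℝ with G symmetric (Gᵀ = G), P : ℝ → Matrix (Fin n) (Fin n) ℝ, e : ℝ → (Fin n → ℝ), and t : ℝ. Assume IsUnit (P t), (P t)ᵀ = P t, that P has derivative A * P t + P t * Aᵀ + W - P t * G * P t at t (HasDerivAt), and that e has derivative ((A - P t * G) *ᵥ e t) at t. Then the function V : ℝ → ℝ, V s = (e s) ⬝ᵥ ((P s)⁻¹ *ᵥ e s), has derivative -( (e t) ⬝ᵥ (((P t)⁻¹ * W * (P t)⁻¹ + G) *ᵥ e t) ) at t. -/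
/-!
Differentiating `V = eᵀ P⁻¹ e` along `ė = M e` with `M = A - P G` gives
`V̇ = eᵀ (Mᵀ P⁻¹ + d(P⁻¹)/dt + P⁻¹ M) e`, and `d(P⁻¹)/dt = -P⁻¹ Ṗ P⁻¹`.
Substituting the Riccati equation for `Ṗ` and using the symmetry of `P` and `G`,
the terms in `A` cancel and the matrix collapses to `-(P⁻¹ W P⁻¹ + G)`.
-/

open Matrix

section MatrixCalculus

variable {𝕜 : Type*} [NontriviallyNormedField 𝕜] {m n : Type*} [Fintype n] {t : 𝕜}

theorem HasDerivAt.dotProduct {v w : 𝕜 → n → 𝕜} {v' w' : n → 𝕜}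
    (hv : HasDerivAt v v' t) (hw : HasDerivAt w w' t) :
    HasDerivAt (fun s => v s ⬝ᵥ w s) (v' ⬝ᵥ w t + v t ⬝ᵥ w') t := by
  unfold _root_.dotProduct
  rw [← Finset.sum_add_distrib]
  exact .fun_sum fun i _ => (hasDerivAt_pi.mp hv i).fun_mul (hasDerivAt_pi.mp hw i)

theorem HasDerivAt.mulVec {Q : 𝕜 → Matrix m n 𝕜} {v : 𝕜 → n → 𝕜} {Q' : Matrix m n 𝕜}
    {v' : n → 𝕜} (hQ : HasDerivAt Q Q' t) (hv : HasDerivAt v v' t) :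
    HasDerivAt (fun s => Q s *ᵥ v s) (Q' *ᵥ v t + Q t *ᵥ v') t :=
  hasDerivAt_pi.mpr fun i => (hasDerivAt_pi.mp hQ i).dotProduct hv

theorem HasDerivAt.dotProduct_mulVec_of_linear {Q : 𝕜 → Matrix n n 𝕜} {e : 𝕜 → n → 𝕜}
    {Q' M : Matrix n n 𝕜} (hQ : HasDerivAt Q Q' t) (he : HasDerivAt e (M *ᵥ e t) t) :
    HasDerivAt (fun s => e s ⬝ᵥ (Q s *ᵥ e s)) (e t ⬝ᵥ ((Mᵀ * Q t + Q' + Q t * M) *ᵥ e t)) t := by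
  convert he.dotProduct (hQ.mulVec he) using 1
  rw [add_mulVec, add_mulVec, dotProduct_add, dotProduct_add, ← mulVec_mulVec, ← mulVec_mulVec,
    dotProduct_transpose_mulVec, dotProduct_comm, add_assoc, dotProduct_add]

end MatrixCalculus

/- `HasDerivAt` only sees the topology of the matrix space, which every matrix norm induces,
so the derivative of `Ring.inverse` in the normed ring of the `L∞` operator norm applies. -/
attribute [local instance] Matrix.linftyOpNormedRing Matrix.linftyOpNormedAlgebra in
theorem HasDerivAt.matrix_inv {𝕜 n : Type*} [RCLike 𝕜] [Fintype n] [DecidableEq n] {t : 𝕜}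
    {P : 𝕜 → Matrix n n 𝕜} {P' : Matrix n n 𝕜} (hP : HasDerivAt P P' t) (hPt : IsUnit (P t)) :
    HasDerivAt (fun s => (P s)⁻¹) (-((P t)⁻¹ * P' * (P t)⁻¹)) t := by
  obtain ⟨u, hu⟩ := hPt
  have hinv : HasFDerivAt Ring.inverse
      (-ContinuousLinearMap.mulLeftRight 𝕜 _ (P t)⁻¹ (P t)⁻¹) (P t) := by
    rw [← hu, ← coe_units_inv]
    exact hasFDerivAt_ringInverse u
  rw [show (fun s => (P s)⁻¹) = Ring.inverse ∘ P from funext fun s => nonsing_inv_eq_ringInverse _]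
  exact hinv.comp_hasDerivAt t hP

theorem riccati_lyapunov_identity {n R : Type*} [Fintype n] [DecidableEq n] [CommRing R]
    (A W G P : Matrix n n R) (hG : Gᵀ = G) (hP : IsUnit P) (hPsymm : Pᵀ = P) :
    (A - P * G)ᵀ * P⁻¹ + -(P⁻¹ * (A * P + P * Aᵀ + W - P * G * P) * P⁻¹) + P⁻¹ * (A - P * G)
      = -(P⁻¹ * W * P⁻¹ + G) := by
  have hdet : IsUnit P.det := (isUnit_iff_isUnit_det P).mp hP
  have hPinv : P * P⁻¹ = 1 := mul_nonsing_inv P hdet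
  have hinvP (X : Matrix n n R) : P⁻¹ * (P * X) = X := by
    rw [← Matrix.mul_assoc, nonsing_inv_mul P hdet, Matrix.one_mul]
  rw [transpose_sub, transpose_mul, hG, hPsymm]
  simp only [Matrix.mul_add, Matrix.add_mul, Matrix.mul_sub, Matrix.sub_mul, Matrix.mul_assoc,
    hPinv, hinvP, Matrix.mul_one, neg_add]
  abel

attribute [local instance] Matrix.normedAddCommGroup Matrix.normedSpace

theorem stmt14_general {n : ℕ} (A W G : Matrix (Fin n) (Fin n) ℝ)
    (hGsym : Gᵀ = G)
    (P : ℝ → Matrix (Fin n) (Fin n) ℝ) (e : ℝ → (Fin n → ℝ)) (t : ℝ)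
    (hPunit : IsUnit (P t)) (hPsym : (P t)ᵀ = P t)
    (hP : HasDerivAt P (A * P t + P t * Aᵀ + W - P t * G * P t) t)
    (he : HasDerivAt e ((A - P t * G) *ᵥ e t) t) :
    HasDerivAt (fun s => (e s) ⬝ᵥ ((P s)⁻¹ *ᵥ e s))
      (-((e t) ⬝ᵥ (((P t)⁻¹ * W * (P t)⁻¹ + G) *ᵥ e t))) t := by
  have hV := (hP.matrix_inv hPunit).dotProduct_mulVec_of_linear he
  rwa [riccati_lyapunov_identity A W G (P t) hGsym hPunit hPsym, neg_mulVec,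
    dotProduct_neg] at hV

theorem stmt14 {n : ℕ} (hn : 0 < n) (A W G : Matrix (Fin n) (Fin n) ℝ)
    (hGsym : Gᵀ = G)
    (P : ℝ → Matrix (Fin n) (Fin n) ℝ) (e : ℝ → (Fin n → ℝ)) (t : ℝ)
    (hPunit : IsUnit (P t)) (hPsym : (P t)ᵀ = P t)
    (hP : HasDerivAt P (A * P t + P t * Aᵀ + W - P t * G * P t) t)
    (he : HasDerivAt e ((A - P t * G) *ᵥ e t) t) :
    HasDerivAt (fun s => (e s) ⬝ᵥ ((P s)⁻¹ *ᵥ e s))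
      (-((e t) ⬝ᵥ (((P t)⁻¹ * W * (P t)⁻¹ + G) *ᵥ e t))) t :=
  stmt14_general A W G hGsym P e t hPunit hPsym hP he
end
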